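/- Let 1 < p < 2 and c ≥ d be real numbers. With signed powers a^r := |a|^{r-1}a, one has c - d ≤ (1/(p-1)) · (c² + d²)^{(2-p)/2} · (c^{p-1} - d^{p-1}). -/

import Mathlib

/-! On `[0, ∞)` the tangent-line bound for the concave map `t ↦ t ^ q` is exactly the weighted
AM-GM inequality `c ^ (1 - q) * d ^ q ≤ (1 - q) * c + q * d`. Since the signed power is odd,
the inequality `q * (c - d) ≤ M ^ (1 - q) * (spow c q - spow d q)` for `|c|, |d| ≤ M` transfers
to `c ≤ 0`, and for `d < 0 < c` it is the sum of the two one-signed cases split at `0`.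
Finally `M = √(c² + d²)` bounds both `|c|` and `|d|`. -/

open Real

/-- Signed power: `a^r := |a|^(r-1) * a`. -/
noncomputable def spow (a r : ℝ) : ℝ := |a| ^ (r - 1) * a

lemma spow_of_nonneg {a r : ℝ} (hr : r ≠ 0) (ha : 0 ≤ a) : spow a r = a ^ r := by
  rcases ha.eq_or_lt with rfl | ha
  · simp [spow, zero_rpow hr]
  · rw [spow, abs_of_pos ha, ← rpow_add_one ha.ne', sub_add_cancel]

lemma spow_neg (a r : ℝ) : spow (-a) r = -spow a r := by
  rw [spow, spow, abs_neg, mul_neg]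

lemma mul_sub_le_rpow_mul_rpow_sub_rpow {q d c M : ℝ} (hq0 : 0 ≤ q) (hq1 : q ≤ 1)
    (hd : 0 ≤ d) (hdc : d ≤ c) (hcM : c ≤ M) :
    q * (c - d) ≤ M ^ (1 - q) * (c ^ q - d ^ q) := by
  have hc : 0 ≤ c := hd.trans hdc
  have hmono : 0 ≤ c ^ q - d ^ q := sub_nonneg.2 (rpow_le_rpow hd hdc hq0)
  have hcM' : c ^ (1 - q) ≤ M ^ (1 - q) := rpow_le_rpow hc hcM (by linarith)
  suffices q * (c - d) ≤ c ^ (1 - q) * (c ^ q - d ^ q) from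
    this.trans (mul_le_mul_of_nonneg_right hcM' hmono)
  rcases hc.eq_or_lt with rfl | hc
  · obtain rfl : d = 0 := le_antisymm hdc hd
    simp
  have amgm : c ^ (1 - q) * d ^ q ≤ (1 - q) * c + q * d :=
    geom_mean_le_arith_mean2_weighted (by linarith) hq0 hc.le hd (by ring)
  have hcancel : c ^ (1 - q) * c ^ q = c := by
    rw [← rpow_add hc, sub_add_cancel, rpow_one]
  nlinarith

lemma mul_sub_le_rpow_mul_spow_sub_spow {q d c M : ℝ} (hq0 : 0 < q) (hq1 : q ≤ 1)
    (hdc : d ≤ c) (hcM : |c| ≤ M) (hdM : |d| ≤ M) :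
    q * (c - d) ≤ M ^ (1 - q) * (spow c q - spow d q) := by
  obtain ⟨-, hcM⟩ := abs_le.mp hcM
  obtain ⟨hMd, -⟩ := abs_le.mp hdM
  have of_nonneg : ∀ {a b : ℝ}, 0 ≤ a → a ≤ b → b ≤ M →
      q * (b - a) ≤ M ^ (1 - q) * (spow b q - spow a q) := fun ha hab hbM => by
    rw [spow_of_nonneg hq0.ne' ha, spow_of_nonneg hq0.ne' (ha.trans hab)]
    exact mul_sub_le_rpow_mul_rpow_sub_rpow hq0.le hq1 ha hab hbM
  have of_nonpos : ∀ {a b : ℝ}, -M ≤ a → a ≤ b → b ≤ 0 →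
      q * (b - a) ≤ M ^ (1 - q) * (spow b q - spow a q) := fun hMa hab hb => by
    have h := of_nonneg (neg_nonneg.2 hb) (neg_le_neg hab) (by linarith)
    rw [spow_neg, spow_neg] at h
    linarith
  rcases le_total 0 d with hd | hd
  · exact of_nonneg hd hdc hcM
  rcases le_total c 0 with hc | hc
  · exact of_nonpos hMd hdc hc
  · linarith [of_nonneg le_rfl hc hcM, of_nonpos hMd hd le_rfl]

theorem stmt2 (p c d : ℝ) (hp1 : 1 < p) (hp2 : p < 2) (hcd : d ≤ c) :
    c - d ≤ (1 / (p - 1)) * (c ^ 2 + d ^ 2) ^ ((2 - p) / 2) *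
      (spow c (p - 1) - spow d (p - 1)) := by
  have hq : 0 < p - 1 := by linarith
  have key := mul_sub_le_rpow_mul_spow_sub_spow hq (by linarith) hcd
    (abs_le_sqrt (by nlinarith : c ^ 2 ≤ c ^ 2 + d ^ 2))
    (abs_le_sqrt (by nlinarith : d ^ 2 ≤ c ^ 2 + d ^ 2))
  have hM : √(c ^ 2 + d ^ 2) ^ (1 - (p - 1)) = (c ^ 2 + d ^ 2) ^ ((2 - p) / 2) := by
    rw [sqrt_eq_rpow, ← rpow_mul (by positivity)]
    ring_nf
  rw [hM] at key
  rw [one_div_mul_eq_div, div_mul_eq_mul_div, le_div_iff₀ hq]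
  linarith
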